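/- Let S be a finite set of n points in ℝ^p, G ⊆ S with |G| = n_G, sample means θ_S, θ_G and sample covariances Σ_S, Σ_G. Then ‖θ_G - θ_S‖₂ ≤ (1/(√(n/(n-n_G)) - 1)) (‖Σ_S‖₂^{1/2} + ‖Σ_G‖₂^{1/2}). -/

import Mathlib

/-!
Put `d = θ_G - θ_S` and `y i = x i - θ_S`. The `y i` sum to zero over `S` and to `|G| • d` over `G`,
so `|G| ‖d‖² = ∑_{i ∈ G} ⟪y i, d⟫ = -∑_{i ∈ S \ G} ⟪y i, d⟫`. Cauchy–Schwarz over `S \ G` bounds the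
square of this by `|S \ G| ∑_{i ∈ S} ⟪y i, d⟫² = |S \ G| |S| ⟪d, Σ_S d⟫ ≤ |S \ G| |S| ‖Σ_S‖ ‖d‖²`,
hence `‖d‖ ≤ √(n (n - n_G)) / n_G · ‖Σ_S‖^{1/2}`, and this factor is at most
`1 / (√(n / (n - n_G)) - 1)`.
-/

open MeasureTheory

/-- Sample mean of the points indexed by a finite set `w`. -/
noncomputable def sampleMean {n p : ℕ} (x : Fin n → EuclideanSpace ℝ (Fin p))
    (w : Finset (Fin n)) : EuclideanSpace ℝ (Fin p) :=
  (w.card : ℝ)⁻¹ • ∑ i ∈ w, x i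

/-- Sample covariance matrix of the points indexed by a finite set `w`. -/
noncomputable def sampleCov {n p : ℕ} (x : Fin n → EuclideanSpace ℝ (Fin p))
    (w : Finset (Fin n)) : Matrix (Fin p) (Fin p) ℝ :=
  Matrix.of fun a b =>
    (w.card : ℝ)⁻¹ * ∑ i ∈ w, (x i a - sampleMean x w a) * (x i b - sampleMean x w b)

open Finset
open scoped RealInnerProductSpace

theorem sq_sum_le_card_sdiff_mul_sum_sq {ι α : Type*} [DecidableEq ι] [Ring α] [LinearOrder α]
    [IsStrictOrderedRing α] {s t : Finset ι} (f : ι → α) (hts : t ⊆ s)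
    (hf : ∑ i ∈ s, f i = 0) :
    (∑ i ∈ t, f i) ^ 2 ≤ #(s \ t) * ∑ i ∈ s, f i ^ 2 := by
  have hcompl : ∑ i ∈ t, f i = -∑ i ∈ s \ t, f i := by
    rw [eq_neg_iff_add_eq_zero, add_comm, sum_sdiff hts, hf]
  calc (∑ i ∈ t, f i) ^ 2 = (∑ i ∈ s \ t, f i) ^ 2 := by rw [hcompl, neg_sq]
    _ ≤ #(s \ t) * ∑ i ∈ s \ t, f i ^ 2 := sq_sum_le_card_mul_sum_sq
    _ ≤ #(s \ t) * ∑ i ∈ s, f i ^ 2 := by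
      gcongr
      exact sdiff_subset

theorem Real.sqrt_mul_sub_div_le_one_div_sqrt_div_sub_sub_one {N c : ℝ} (hc : 0 < c)
    (hcN : c < N) :
    √(N * (N - c)) / c ≤ 1 / (√(N / (N - c)) - 1) := by
  set b := N - c
  have hb : 0 < b := sub_pos.2 hcN
  have hsb : 0 < √b := Real.sqrt_pos.2 hb
  have hsbN : √b < √N := Real.sqrt_lt_sqrt hb.le (by linarith)
  have hN : 0 ≤ N := by linarith
  have hsN : 0 < √N := hsb.trans hsbN
  -- with `u = √N` and `v = √b` both sides become `u v / (u² - v²) ≤ v / (u - v)`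
  have hc' : c = √N ^ 2 - √b ^ 2 := by
    rw [Real.sq_sqrt hN, Real.sq_sqrt hb.le]; ring
  rw [Real.sqrt_mul hN, Real.sqrt_div' _ hb.le, hc', div_sub_one hsb.ne', one_div_div,
    div_le_div_iff₀ (by nlinarith) (sub_pos.2 hsbN)]
  nlinarith [mul_pos hsb (sub_pos.2 hsbN), mul_pos hsb hsN]

section SampleStatistics

variable {n p : ℕ} (x : Fin n → EuclideanSpace ℝ (Fin p))

theorem card_smul_sampleMean {w : Finset (Fin n)} (hw : w.Nonempty) :
    (#w : ℝ) • sampleMean x w = ∑ i ∈ w, x i :=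
  smul_inv_smul₀ (by exact_mod_cast hw.card_pos.ne') _

theorem sum_sub_eq_card_smul_sampleMean_sub {w : Finset (Fin n)} (hw : w.Nonempty)
    (m : EuclideanSpace ℝ (Fin p)) :
    ∑ i ∈ w, (x i - m) = (#w : ℝ) • (sampleMean x w - m) := by
  rw [sum_sub_distrib, sum_const, smul_sub, card_smul_sampleMean x hw, Nat.cast_smul_eq_nsmul]

theorem sum_sub_sampleMean {w : Finset (Fin n)} (hw : w.Nonempty) :
    ∑ i ∈ w, (x i - sampleMean x w) = 0 := by
  rw [sum_sub_eq_card_smul_sampleMean_sub x hw, sub_self, smul_zero]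

theorem inner_toEuclideanCLM_sampleCov (w : Finset (Fin n)) (d : EuclideanSpace ℝ (Fin p)) :
    ⟪d, Matrix.toEuclideanCLM (𝕜 := ℝ) (sampleCov x w) d⟫ =
      (#w : ℝ)⁻¹ * ∑ i ∈ w, ⟪x i - sampleMean x w, d⟫ ^ 2 := by
  rw [Matrix.inner_toEuclideanCLM]
  simp only [sampleCov, dotProduct, Matrix.mulVec, Matrix.of_apply, PiLp.inner_apply,
    RCLike.inner_apply, conj_trivial, PiLp.sub_apply, sq, mul_sum, sum_mul]
  rw [sum_comm_cycle]
  exact sum_congr rfl fun i _ => sum_comm.trans <|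
    sum_congr rfl fun b _ => sum_congr rfl fun a _ => by ring

theorem norm_sampleMean_sub_sampleMean_le {S G : Finset (Fin n)} (hGS : G ⊆ S) (hG : G.Nonempty) :
    ‖sampleMean x G - sampleMean x S‖ ≤
      √(#S * #(S \ G)) / #G * √‖Matrix.toEuclideanCLM (𝕜 := ℝ) (sampleCov x S)‖ := by
  set d := sampleMean x G - sampleMean x S
  set T := Matrix.toEuclideanCLM (𝕜 := ℝ) (sampleCov x S)
  set a : Fin n → ℝ := fun i => ⟪x i - sampleMean x S, d⟫
  have hS : S.Nonempty := hG.mono hGS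
  have hcardG : (0 : ℝ) < #G := by exact_mod_cast hG.card_pos
  have hcardS : (0 : ℝ) < #S := by exact_mod_cast hS.card_pos
  have ha_sum_S : ∑ i ∈ S, a i = 0 := by
    rw [← sum_inner, sum_sub_sampleMean x hS, inner_zero_left]
  have ha_sum_G : ∑ i ∈ G, a i = #G * ‖d‖ ^ 2 := by
    rw [← sum_inner, sum_sub_eq_card_smul_sampleMean_sub x hG, real_inner_smul_left,
      real_inner_self_eq_norm_sq]
  have ha_sum_sq : ∑ i ∈ S, a i ^ 2 ≤ #S * (‖T‖ * ‖d‖ ^ 2) := calc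
    ∑ i ∈ S, a i ^ 2 = #S * ⟪d, T d⟫ := by
      rw [inner_toEuclideanCLM_sampleCov, mul_inv_cancel_left₀ hcardS.ne']
    _ ≤ #S * (‖T‖ * ‖d‖ ^ 2) := by
      gcongr
      calc ⟪d, T d⟫ ≤ ‖d‖ * ‖T d‖ := real_inner_le_norm _ _
        _ ≤ ‖d‖ * (‖T‖ * ‖d‖) := by gcongr; exact T.le_opNorm d
        _ = ‖T‖ * ‖d‖ ^ 2 := by ring
  have key : (#G * ‖d‖ ^ 2) ^ 2 ≤ #(S \ G) * (#S * (‖T‖ * ‖d‖ ^ 2)) := by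
    rw [← ha_sum_G]
    exact (sq_sum_le_card_sdiff_mul_sum_sq a hGS ha_sum_S).trans (by gcongr)
  have hsq : (#G * ‖d‖) ^ 2 ≤ #S * #(S \ G) * ‖T‖ := by
    rcases (norm_nonneg d).eq_or_lt with hd | hd
    · rw [← hd, mul_zero, zero_pow two_ne_zero]; positivity
    · nlinarith [pow_pos hd 2]
  rw [div_mul_eq_mul_div, le_div_iff₀ hcardG, ← Real.sqrt_mul (by positivity), mul_comm]
  exact Real.le_sqrt_of_sq_le hsq

end SampleStatistics

/-- The sample mean of a subset `G` of a sample `S` is close to the sample mean of `S`,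
at a scale governed by the spectral norms of the two sample covariances. -/
theorem subset_mean_control
    {n p : ℕ} (x : Fin n → EuclideanSpace ℝ (Fin p))
    (G : Finset (Fin n)) (hG : 0 < G.card) (hGn : G.card < n) :
    ‖sampleMean x G - sampleMean x Finset.univ‖ ≤
      (1 / (Real.sqrt ((n : ℝ) / ((n : ℝ) - G.card)) - 1)) *
        (Real.sqrt ‖Matrix.toEuclideanCLM (𝕜 := ℝ) (sampleCov x Finset.univ)‖ +
         Real.sqrt ‖Matrix.toEuclideanCLM (𝕜 := ℝ) (sampleCov x G)‖) := by
  have hcompl : (#(univ \ G) : ℝ) = n - #G := by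
    rw [← compl_eq_univ_sdiff, card_compl, Fintype.card_fin, Nat.cast_sub hGn.le]
  have hfactor := Real.sqrt_mul_sub_div_le_one_div_sqrt_div_sub_sub_one
    (Nat.cast_pos.2 hG) (Nat.cast_lt.2 hGn)
  set T := Matrix.toEuclideanCLM (𝕜 := ℝ) (sampleCov x univ)
  calc ‖sampleMean x G - sampleMean x univ‖ ≤ √(n * (n - #G)) / #G * √‖T‖ := by
        simpa [hcompl] using norm_sampleMean_sub_sampleMean_le x (subset_univ G) (card_pos.1 hG)
    _ ≤ 1 / (√(n / (n - #G)) - 1) * √‖T‖ := by gcongr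
    _ ≤ _ := by
        gcongr
        · exact (by positivity : (0 : ℝ) ≤ √(n * (n - #G)) / #G).trans hfactor
        · exact le_add_of_nonneg_right (Real.sqrt_nonneg _)
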